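/- arXiv:2211.05670 — 2 statements merged into one kernel-verified Lean document; each statement's English description precedes it below -/
import Mathlib

section
/- Let d ≥ 1, c ≥ 1, γ > 0, and let λ : ℤ^d → ℝ satisfy λ_{n+k} ≠ λ_n for all n ∈ ℤ^d, k ≠ 0, together with conditions (A1)–(A3). Let ℓ ∈ ℕ, let α_0 ≥ α_1 ≥ … ≥ α_ℓ > 0, let V^{(0)},…,V^{(ℓ)} : ℤ^d × ℤ^d → ℂ be matrices with ‖V^{(j)}‖_{α_j} < ∞ for j = 0,…,ℓ, let ε ∈ ℝ and ε_j := ε^{2^j}. If Σ_{j=0}^{ℓ} |ε_j| · ‖V^{(j)}‖_{α_j} ≤ 1/(4c), then the perturbed eigenvalues λ^{(ℓ+1)}_n := λ_n + Σ_{j=0}^{ℓ} ε_j V^{(j)}_{n,n} are pairwise distinct, and for every k ≠ 0: sup_{n ∈ ℤ^d} 1/|λ^{(ℓ+1)}_{n+k} − λ^{(ℓ+1)}_n| ≤ 12 c² |k|^{2γ}. -/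
/-!
Each diagonal entry of `V^{(j)}` moves by at most `min(2, t) ‖V^{(j)}‖_{α_j}` along the shift `k`,
where `t = |λ_k − λ_0|`: by twice its sup norm, or by `t` times its T-norm difference quotient.
Hence the smallness assumption perturbs the gap `λ_{n+k} − λ_n` by at most `min(2, t)/(4c)`,
while (A2) keeps the unperturbed gap above `min(2, t)/(3c)`. The perturbed gap is therefore at
least `min(2, t)/(12c)`, and (A1) at `n = 0`, i.e. `1/t ≤ c|k|^γ`, turns this into the bound
`12c²|k|^γ ≤ 12c²|k|^{2γ}` on its reciprocal.
-/

open scoped ENNReal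

noncomputable section


abbrev Zd (d : ℕ) := Fin d → ℤ

/-- `|k| = |k₁| + ⋯ + |k_d|` as a real number. -/
def absZ {d : ℕ} (k : Zd d) : ℝ := ∑ i, |(k i : ℝ)|

/-- The T-norm of a sequence `a : ℤ^d → ℂ` relative to the base sequence `lam`. -/
def Tnorm {d : ℕ} (lam : Zd d → ℝ) (a : Zd d → ℂ) : ℝ≥0∞ :=
  (⨆ n : Zd d, ENNReal.ofReal ‖a n‖) +
    ⨆ n : Zd d, ⨆ j : {j : Zd d // j ≠ 0},
      ENNReal.ofReal (‖a (n + j.1) - a n‖ / |lam j.1 - lam 0|)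

/-- The α-norm of a matrix `A : ℤ^d × ℤ^d → ℂ`:
`‖A‖_α = sup_k e^{α|k|} ‖A_k‖_T`, where `A_k = (A_{n,n+k})_n`. -/
def matNorm {d : ℕ} (lam : Zd d → ℝ) (α : ℝ) (A : Zd d → Zd d → ℂ) : ℝ≥0∞ :=
  ⨆ k : Zd d, ENNReal.ofReal (Real.exp (α * absZ k)) * Tnorm lam (fun n => A n (n + k))


open Finset

lemma one_le_absZ {d : ℕ} {k : Zd d} (hk : k ≠ 0) : 1 ≤ absZ k := by
  obtain ⟨i, hi⟩ := Function.ne_iff.mp hk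
  calc (1 : ℝ) ≤ |(k i : ℝ)| := by exact_mod_cast Int.one_le_abs hi
    _ ≤ absZ k :=
      single_le_sum (f := fun i => |(k i : ℝ)|) (fun _ _ => abs_nonneg _) (mem_univ i)

section Tnorm

variable {d : ℕ} (lam : Zd d → ℝ) (a : Zd d → ℂ)

lemma ofReal_norm_le_Tnorm (n : Zd d) : ENNReal.ofReal ‖a n‖ ≤ Tnorm lam a :=
  (le_iSup (fun n => ENNReal.ofReal ‖a n‖) n).trans le_self_add

lemma ofReal_norm_sub_div_le_Tnorm (n : Zd d) {j : Zd d} (hj : j ≠ 0) :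
    ENNReal.ofReal (‖a (n + j) - a n‖ / |lam j - lam 0|) ≤ Tnorm lam a := by
  unfold Tnorm
  exact le_add_left (le_iSup₂_of_le (f := fun n (j : {j : Zd d // j ≠ 0}) =>
    ENNReal.ofReal (‖a (n + j.1) - a n‖ / |lam j.1 - lam 0|)) n ⟨j, hj⟩ le_rfl)

lemma ofReal_norm_sub_le_min_mul_Tnorm (n : Zd d) {j : Zd d} (hlam : lam j ≠ lam 0) :
    ENNReal.ofReal ‖a (n + j) - a n‖ ≤
      ENNReal.ofReal (min 2 |lam j - lam 0|) * Tnorm lam a := by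
  rcases le_total 2 |lam j - lam 0| with h | h
  · rw [min_eq_left h]
    calc ENNReal.ofReal ‖a (n + j) - a n‖
        ≤ ENNReal.ofReal ‖a (n + j)‖ + ENNReal.ofReal ‖a n‖ := by
          rw [← ENNReal.ofReal_add (norm_nonneg _) (norm_nonneg _)]
          exact ENNReal.ofReal_le_ofReal (norm_sub_le _ _)
      _ ≤ Tnorm lam a + Tnorm lam a :=
          add_le_add (ofReal_norm_le_Tnorm lam a _) (ofReal_norm_le_Tnorm lam a _)
      _ = ENNReal.ofReal 2 * Tnorm lam a := by rw [ENNReal.ofReal_ofNat, two_mul]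
  · rw [min_eq_right h]
    have ht : 0 < |lam j - lam 0| := abs_pos.mpr (sub_ne_zero.mpr hlam)
    have hj : j ≠ 0 := by rintro rfl; exact hlam rfl
    calc ENNReal.ofReal ‖a (n + j) - a n‖
        = ENNReal.ofReal |lam j - lam 0| *
            ENNReal.ofReal (‖a (n + j) - a n‖ / |lam j - lam 0|) := by
          rw [← ENNReal.ofReal_mul ht.le, mul_div_cancel₀ _ ht.ne']
      _ ≤ _ := by gcongr; exact ofReal_norm_sub_div_le_Tnorm lam a n hj

lemma Tnorm_diag_le_matNorm (α : ℝ) (A : Zd d → Zd d → ℂ) :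
    Tnorm lam (fun n => A n n) ≤ matNorm lam α A := by
  have h := le_iSup (fun k => ENNReal.ofReal (Real.exp (α * absZ k)) *
    Tnorm lam (fun n => A n (n + k))) 0
  have h0 : absZ (0 : Zd d) = 0 := by simp [absZ]
  simpa only [h0, mul_zero, Real.exp_zero, ENNReal.ofReal_one, one_mul, add_zero, matNorm] using h

end Tnorm

/-- `λ_n + ∑_{j ∈ s} w_j V^{(j)}_{n,n}`: the eigenvalues `λ^{(ℓ+1)}` for `s = range (ℓ + 1)` and
`w j = ε ^ 2 ^ j`. -/
def perturbedDiag {d : ℕ} (lam : Zd d → ℝ) (s : Finset ℕ) (w : ℕ → ℝ)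
    (V : ℕ → Zd d → Zd d → ℂ) (n : Zd d) : ℂ :=
  lam n + ∑ j ∈ s, (w j : ℂ) * V j n n

section Perturbation

variable {d : ℕ} {lam : Zd d → ℝ} {s : Finset ℕ} {w α : ℕ → ℝ} {V : ℕ → Zd d → Zd d → ℂ}

lemma norm_perturbation_sub_le {B : ℝ} (hB : 0 ≤ B)
    (hsum : ∑ j ∈ s, ENNReal.ofReal |w j| * matNorm lam (α j) (V j) ≤ ENNReal.ofReal B)
    (n : Zd d) {k : Zd d} (hlam : lam k ≠ lam 0) :
    ‖∑ j ∈ s, (w j : ℂ) * (V j (n + k) (n + k) - V j n n)‖ ≤ min 2 |lam k - lam 0| * B := by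
  set m := min 2 |lam k - lam 0|
  have hm : 0 ≤ m := le_min zero_le_two (abs_nonneg _)
  have hterm : ∀ j, ENNReal.ofReal (|w j| * ‖V j (n + k) (n + k) - V j n n‖) ≤
      ENNReal.ofReal |w j| * (ENNReal.ofReal m * matNorm lam (α j) (V j)) := fun j => by
    rw [ENNReal.ofReal_mul (abs_nonneg _)]
    gcongr
    exact (ofReal_norm_sub_le_min_mul_Tnorm lam (fun n => V j n n) n hlam).trans
      (by gcongr; exact Tnorm_diag_le_matNorm lam (α j) (V j))
  refine (norm_sum_le _ _).trans ?_
  simp only [norm_mul, Complex.norm_real, Real.norm_eq_abs]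
  rw [← ENNReal.ofReal_le_ofReal_iff (mul_nonneg hm hB),
    ENNReal.ofReal_sum_of_nonneg (fun j _ => by positivity)]
  calc ∑ j ∈ s, ENNReal.ofReal (|w j| * ‖V j (n + k) (n + k) - V j n n‖)
      ≤ ∑ j ∈ s, ENNReal.ofReal |w j| * (ENNReal.ofReal m * matNorm lam (α j) (V j)) :=
        sum_le_sum fun j _ => hterm j
    _ = ENNReal.ofReal m * ∑ j ∈ s, ENNReal.ofReal |w j| * matNorm lam (α j) (V j) := by
        rw [mul_sum]; exact sum_congr rfl fun j _ => mul_left_comm _ _ _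
    _ ≤ ENNReal.ofReal m * ENNReal.ofReal B := by gcongr
    _ = ENNReal.ofReal (m * B) := (ENNReal.ofReal_mul hm).symm

lemma min_two_div_le_of_one_div_le {g t c : ℝ} (hg : 0 < g) (ht : 0 < t) (hc : 0 < c)
    (h : 1 / g ≤ c * (1 + 1 / t)) : min 2 t / (3 * c) ≤ g := by
  have hm : 0 < min 2 t := lt_min two_pos ht
  have hmt : 1 + 1 / t ≤ 3 / min 2 t := by
    rcases le_total t 2 with h2 | h2
    · rw [min_eq_right h2, le_div_iff₀ ht, add_mul, one_div_mul_cancel ht.ne']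
      linarith
    · have : 1 / t ≤ 1 / 2 := one_div_le_one_div_of_le two_pos h2
      rw [min_eq_left h2]
      linarith
  refine le_of_one_div_le_one_div hg (h.trans ?_)
  calc c * (1 + 1 / t) ≤ c * (3 / min 2 t) := by gcongr
    _ = 1 / (min 2 t / (3 * c)) := by field_simp

lemma min_two_div_le_norm_perturbedDiag_sub {c : ℝ} (hc : 0 < c)
    (hsum : ∑ j ∈ s, ENNReal.ofReal |w j| * matNorm lam (α j) (V j) ≤
      ENNReal.ofReal (1 / (4 * c)))
    {n k : Zd d} (hgap : lam (n + k) ≠ lam n) (hbase : lam k ≠ lam 0)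
    (hA2 : 1 / |lam (n + k) - lam n| ≤ c * (1 + 1 / |lam k - lam 0|)) :
    min 2 |lam k - lam 0| / (12 * c) ≤
      ‖perturbedDiag lam s w V (n + k) - perturbedDiag lam s w V n‖ := by
  have hsplit : perturbedDiag lam s w V (n + k) - perturbedDiag lam s w V n =
      ((lam (n + k) - lam n : ℝ) : ℂ) + ∑ j ∈ s, (w j : ℂ) * (V j (n + k) (n + k) - V j n n) := by
    simp only [perturbedDiag, mul_sub, sum_sub_distrib]
    push_cast
    ring
  have hg := min_two_div_le_of_one_div_le (abs_pos.mpr (sub_ne_zero.mpr hgap))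
    (abs_pos.mpr (sub_ne_zero.mpr hbase)) hc hA2
  have hP := norm_perturbation_sub_le (by positivity) hsum n hbase
  have htri := norm_sub_le_norm_add ((lam (n + k) - lam n : ℝ) : ℂ)
    (∑ j ∈ s, (w j : ℂ) * (V j (n + k) (n + k) - V j n n))
  rw [Complex.norm_real, Real.norm_eq_abs] at htri
  rw [hsplit]
  calc min 2 |lam k - lam 0| / (12 * c)
      = min 2 |lam k - lam 0| / (3 * c) - min 2 |lam k - lam 0| * (1 / (4 * c)) := by
        field_simp
        ring
    _ ≤ _ := by linarith

end Perturbation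

lemma div_min_two_le {c t K : ℝ} (hc : 1 ≤ c) (hK : 1 ≤ K) (h : 1 / t ≤ c * K) :
    c / min 2 t ≤ c ^ 2 * K := by
  rcases min_cases 2 t with ⟨h2, _⟩ | ⟨h2, _⟩ <;> rw [h2]
  · nlinarith [mul_le_mul hc hK zero_le_one (by linarith)]
  · calc c / t = c * (1 / t) := by ring
      _ ≤ c * (c * K) := by gcongr
      _ = c ^ 2 * K := by ring

theorem diophantine_stability_along_KAM_general
    (d : ℕ) (c γ : ℝ) (hc : 1 ≤ c) (hγ : 0 < γ)
    (lam : Zd d → ℝ)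
    (hne : ∀ (n k : Zd d), k ≠ 0 → lam (n + k) ≠ lam n)
    (hA1 : ∀ (n k : Zd d), k ≠ 0 → 1 / |lam (n + k) - lam n| ≤ c * absZ k ^ γ)
    (hA2 : ∀ (n k : Zd d), k ≠ 0 →
      1 / |lam (n + k) - lam n| ≤ c * (1 + 1 / |lam k - lam 0|))
    (ℓ : ℕ) (α : ℕ → ℝ)
    (V : ℕ → Zd d → Zd d → ℂ)
    (ε : ℝ)
    (hsum : ∑ j ∈ Finset.range (ℓ + 1),
        ENNReal.ofReal |ε ^ 2 ^ j| * matNorm lam (α j) (V j) ≤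
        ENNReal.ofReal (1 / (4 * c))) :
    (∀ n m : Zd d, n ≠ m →
      (lam n : ℂ) + ∑ j ∈ Finset.range (ℓ + 1), ((ε ^ 2 ^ j : ℝ) : ℂ) * V j n n ≠
      (lam m : ℂ) + ∑ j ∈ Finset.range (ℓ + 1), ((ε ^ 2 ^ j : ℝ) : ℂ) * V j m m) ∧
    ∀ k : Zd d, k ≠ 0 → ∀ n : Zd d,
      1 / ‖
          (((lam (n + k) : ℂ) + ∑ j ∈ Finset.range (ℓ + 1),
              ((ε ^ 2 ^ j : ℝ) : ℂ) * V j (n + k) (n + k)) -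
            ((lam n : ℂ) + ∑ j ∈ Finset.range (ℓ + 1),
              ((ε ^ 2 ^ j : ℝ) : ℂ) * V j n n))‖ ≤
        12 * c ^ 2 * absZ k ^ (2 * γ) := by
  set μ := perturbedDiag lam (range (ℓ + 1)) (fun j => ε ^ 2 ^ j) V
  have hc0 : 0 < c := by linarith
  have hbase : ∀ k : Zd d, k ≠ 0 → lam k ≠ lam 0 := fun k hk => by simpa using hne 0 k hk
  have hgap : ∀ k : Zd d, k ≠ 0 → ∀ n : Zd d,
      min 2 |lam k - lam 0| / (12 * c) ≤ ‖μ (n + k) - μ n‖ := fun k hk n =>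
    min_two_div_le_norm_perturbedDiag_sub hc0 hsum (hne n k hk) (hbase k hk) (hA2 n k hk)
  have hgap_pos : ∀ k : Zd d, k ≠ 0 → 0 < min 2 |lam k - lam 0| / (12 * c) := fun k hk =>
    div_pos (lt_min two_pos (abs_pos.mpr (sub_ne_zero.mpr (hbase k hk)))) (by positivity)
  refine ⟨fun n m hnm heq => ?_, fun k hk n => ?_⟩
  · have hk : m - n ≠ 0 := sub_ne_zero.mpr hnm.symm
    have h := hgap (m - n) hk n
    rw [add_sub_cancel, ← show μ n = μ m from heq, sub_self, norm_zero] at h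
    exact (hgap_pos _ hk).not_ge h
  · have hk1 := one_le_absZ hk
    calc 1 / ‖μ (n + k) - μ n‖
        ≤ 1 / (min 2 |lam k - lam 0| / (12 * c)) :=
          one_div_le_one_div_of_le (hgap_pos k hk) (hgap k hk n)
      _ = 12 * (c / min 2 |lam k - lam 0|) := by rw [one_div_div, mul_div_assoc]
      _ ≤ 12 * (c ^ 2 * absZ k ^ γ) := by
          gcongr
          exact div_min_two_le hc (Real.one_le_rpow hk1 hγ.le)
            (by simpa using hA1 0 k hk)
      _ ≤ 12 * c ^ 2 * absZ k ^ (2 * γ) := by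
          rw [← mul_assoc]
          gcongr
          linarith

theorem diophantine_stability_along_KAM
    (d : ℕ) (hd : 1 ≤ d) (c γ : ℝ) (hc : 1 ≤ c) (hγ : 0 < γ)
    (lam : Zd d → ℝ)
    (hne : ∀ (n k : Zd d), k ≠ 0 → lam (n + k) ≠ lam n)
    (hA1 : ∀ (n k : Zd d), k ≠ 0 → 1 / |lam (n + k) - lam n| ≤ c * absZ k ^ γ)
    (hA2 : ∀ (n k : Zd d), k ≠ 0 →
      1 / |lam (n + k) - lam n| ≤ c * (1 + 1 / |lam k - lam 0|))
    (hA3 : ∀ (n j k : Zd d), j ≠ 0 → k ≠ 0 →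
      |(1 / (lam j - lam 0)) *
        (1 / (lam (n + j + k) - lam (n + j)) - 1 / (lam (n + k) - lam n))| ≤
        c * (1 + 1 / |lam k - lam 0|))
    (ℓ : ℕ) (α : ℕ → ℝ)
    (hαpos : 0 < α ℓ)
    (hαmono : ∀ i j : ℕ, i ≤ j → j ≤ ℓ → α j ≤ α i)
    (V : ℕ → Zd d → Zd d → ℂ)
    (hV : ∀ j ≤ ℓ, matNorm lam (α j) (V j) ≠ ⊤)
    (ε : ℝ)
    (hsum : ∑ j ∈ Finset.range (ℓ + 1),
        ENNReal.ofReal |ε ^ 2 ^ j| * matNorm lam (α j) (V j) ≤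
        ENNReal.ofReal (1 / (4 * c))) :
    (∀ n m : Zd d, n ≠ m →
      (lam n : ℂ) + ∑ j ∈ Finset.range (ℓ + 1), ((ε ^ 2 ^ j : ℝ) : ℂ) * V j n n ≠
      (lam m : ℂ) + ∑ j ∈ Finset.range (ℓ + 1), ((ε ^ 2 ^ j : ℝ) : ℂ) * V j m m) ∧
    ∀ k : Zd d, k ≠ 0 → ∀ n : Zd d,
      1 / ‖
          (((lam (n + k) : ℂ) + ∑ j ∈ Finset.range (ℓ + 1),
              ((ε ^ 2 ^ j : ℝ) : ℂ) * V j (n + k) (n + k)) -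
            ((lam n : ℂ) + ∑ j ∈ Finset.range (ℓ + 1),
              ((ε ^ 2 ^ j : ℝ) : ℂ) * V j n n))‖ ≤
        12 * c ^ 2 * absZ k ^ (2 * γ) :=
  diophantine_stability_along_KAM_general d c γ hc hγ lam hne hA1 hA2 ℓ α V ε hsum
end
end

section
/- Let d ≥ 1, let λ : ℤ^d → ℝ satisfy λ_j ≠ λ_0 for all j ≠ 0, let α > 0 and 0 < δ < α. If X, Y : ℤ^d × ℤ^d → ℂ are matrices with ‖X‖_{α−δ} < ∞ and ‖Y‖_α < ∞, then the matrix product XY, with entries (XY)_{n,m} := Σ_{l ∈ ℤ^d} X_{n,l} Y_{l,m} (the series converging absolutely), satisfies ‖XY‖_{α−δ} ≤ q(δ) · ‖X‖_{α−δ} · ‖Y‖_α, where q(δ) := ((1 + e^{−δ})/(1 − e^{−δ}))^d. Moreover, if in addition δ ≤ 1, then q(δ) < (3/δ)^d. -/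
open scoped ENNReal

noncomputable section

/-! The T-norm is a sup-norm plus a weighted Lipschitz seminorm, so it is submultiplicative
(Leibniz rule), invariant under shifts and countably subadditive. The `k`-th diagonal of `XY` is
`∑ₚ Xₚ · τₚ Y_{k-p}` with `τₚ` the shift by `p`, hence
`‖(XY)ₖ‖_T ≤ ∑ₚ ‖Xₚ‖_T ‖Y_{k-p}‖_T ≤ ‖X‖_{α-δ} ‖Y‖_α ∑ₚ e^{-(α-δ)|p| - α|k-p|}`.
By `|k| ≤ |p| + |k-p|` the exponent is at most `-(α-δ)|k| - δ|k-p|`, which leaves the lattice sum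
`∑_q e^{-δ|q|}`, a product of `d` two-sided geometric series, each equal to
`(1 + e^{-δ}) / (1 - e^{-δ})`. -/

section SupAndVariation

variable {G E R : Type*}

def supENorm [ENorm E] (a : G → E) : ℝ≥0∞ := ⨆ n, ‖a n‖ₑ

theorem enorm_le_supENorm [ENorm E] (a : G → E) (n : G) : ‖a n‖ₑ ≤ supENorm a :=
  le_iSup (fun n => ‖a n‖ₑ) n

theorem supENorm_mul_le [NormedRing R] (a b : G → R) :
    supENorm (a * b) ≤ supENorm a * supENorm b :=
  iSup_le fun n => (enorm_smul_le (r := a n) (x := b n)).trans <|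
    mul_le_mul' (enorm_le_supENorm a n) (enorm_le_supENorm b n)

theorem supENorm_tsum_le [NormedAddCommGroup E] {ι : Type*} (f : ι → G → E) :
    supENorm (fun n => ∑' i, f i n) ≤ ∑' i, supENorm (f i) :=
  iSup_le fun n => enorm_tsum_le_tsum_enorm.trans <|
    ENNReal.tsum_le_tsum fun i => enorm_le_supENorm (f i) n

variable [AddCommGroup G]

def weightedVariation [SeminormedAddCommGroup E] (w : G → ℝ≥0∞) (a : G → E) : ℝ≥0∞ :=
  ⨆ n, ⨆ j : {j : G // j ≠ 0}, ‖a (n + j) - a n‖ₑ * w j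

variable [NormedAddCommGroup E] [NormedRing R]

theorem enorm_sub_mul_le_weightedVariation (w : G → ℝ≥0∞) (a : G → E) (n : G)
    (j : {j : G // j ≠ 0}) : ‖a (n + j) - a n‖ₑ * w j ≤ weightedVariation w a :=
  le_iSup₂ (f := fun n (j : {j : G // j ≠ 0}) => ‖a (n + j) - a n‖ₑ * w j) n j

theorem supENorm_comp_add_right (a : G → E) (p : G) :
    supENorm (fun n => a (n + p)) = supENorm a :=
  (Equiv.addRight p).iSup_comp (g := fun n => ‖a n‖ₑ)

theorem weightedVariation_comp_add_right (w : G → ℝ≥0∞) (a : G → E) (p : G) :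
    weightedVariation w (fun n => a (n + p)) = weightedVariation w a := by
  simp only [weightedVariation, add_right_comm _ _ p]
  exact (Equiv.addRight p).iSup_comp
    (g := fun m => ⨆ j : {j : G // j ≠ 0}, ‖a (m + j) - a m‖ₑ * w j)

theorem weightedVariation_mul_le (w : G → ℝ≥0∞) (a b : G → R) :
    weightedVariation w (a * b) ≤
      weightedVariation w a * supENorm b + supENorm a * weightedVariation w b := by
  refine iSup₂_le fun n j => ?_
  have hleibniz : (a * b) (n + j) - (a * b) n =
      (a (n + j) - a n) * b (n + j) + a n * (b (n + j) - b n) := by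
    simp only [Pi.mul_apply]; noncomm_ring
  calc ‖(a * b) (n + j) - (a * b) n‖ₑ * w j
      ≤ (‖a (n + j) - a n‖ₑ * ‖b (n + j)‖ₑ + ‖a n‖ₑ * ‖b (n + j) - b n‖ₑ) * w j := by
        rw [hleibniz]
        gcongr
        exact (enorm_add_le _ _).trans (add_le_add enorm_smul_le enorm_smul_le)
    _ = ‖a (n + j) - a n‖ₑ * w j * ‖b (n + j)‖ₑ + ‖a n‖ₑ * (‖b (n + j) - b n‖ₑ * w j) := by
        ring
    _ ≤ _ := by
        gcongr
        exacts [enorm_sub_mul_le_weightedVariation w a n j, enorm_le_supENorm b _,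
          enorm_le_supENorm a n, enorm_sub_mul_le_weightedVariation w b n j]

theorem weightedVariation_tsum_le {ι : Type*} (w : G → ℝ≥0∞) (f : ι → G → E)
    (hf : ∀ n, Summable fun i => f i n) :
    weightedVariation w (fun n => ∑' i, f i n) ≤ ∑' i, weightedVariation w (f i) := by
  refine iSup₂_le fun n j => ?_
  calc ‖∑' i, f i (n + j) - ∑' i, f i n‖ₑ * w j
      = ‖∑' i, (f i (n + j) - f i n)‖ₑ * w j := by rw [(hf _).tsum_sub (hf n)]
    _ ≤ (∑' i, ‖f i (n + j) - f i n‖ₑ) * w j := by gcongr; exact enorm_tsum_le_tsum_enorm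
    _ = ∑' i, ‖f i (n + j) - f i n‖ₑ * w j := ENNReal.tsum_mul_right.symm
    _ ≤ _ := ENNReal.tsum_le_tsum fun i => enorm_sub_mul_le_weightedVariation w (f i) n j

end SupAndVariation

section Tnorm

variable {d : ℕ} (lam : Zd d → ℝ)

/-- Also where `lam j = lam 0`: there both `x / 0` and `ENNReal.ofReal 0⁻¹` are `0`. -/
theorem Tnorm_eq_supENorm_add_weightedVariation (a : Zd d → ℂ) :
    Tnorm lam a =
      supENorm a + weightedVariation (fun j => ENNReal.ofReal |lam j - lam 0|⁻¹) a := by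
  simp only [Tnorm, supENorm, weightedVariation, div_eq_mul_inv,
    ENNReal.ofReal_mul (norm_nonneg _), ofReal_norm]

theorem enorm_le_Tnorm (a : Zd d → ℂ) (n : Zd d) : ‖a n‖ₑ ≤ Tnorm lam a := by
  rw [Tnorm_eq_supENorm_add_weightedVariation]
  exact (enorm_le_supENorm a n).trans le_self_add

theorem Tnorm_comp_add_right (a : Zd d → ℂ) (p : Zd d) :
    Tnorm lam (fun n => a (n + p)) = Tnorm lam a := by
  simp only [Tnorm_eq_supENorm_add_weightedVariation, supENorm_comp_add_right,
    weightedVariation_comp_add_right]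

theorem Tnorm_mul_le (a b : Zd d → ℂ) : Tnorm lam (a * b) ≤ Tnorm lam a * Tnorm lam b := by
  simp only [Tnorm_eq_supENorm_add_weightedVariation]
  set w := fun j => ENNReal.ofReal |lam j - lam 0|⁻¹
  calc supENorm (a * b) + weightedVariation w (a * b)
      ≤ supENorm a * supENorm b +
          (weightedVariation w a * supENorm b + supENorm a * weightedVariation w b) :=
        add_le_add (supENorm_mul_le a b) (weightedVariation_mul_le w a b)
    _ ≤ supENorm a * supENorm b +
          (weightedVariation w a * supENorm b + supENorm a * weightedVariation w b) +
          weightedVariation w a * weightedVariation w b := le_self_add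
    _ = (supENorm a + weightedVariation w a) * (supENorm b + weightedVariation w b) := by ring

theorem summable_norm_of_tsum_Tnorm_ne_top {ι : Type*} {f : ι → Zd d → ℂ}
    (hf : ∑' i, Tnorm lam (f i) ≠ ⊤) (n : Zd d) : Summable fun i => ‖f i n‖ :=
  tsum_enorm_ne_top_iff_summable_norm.1 <|
    ne_top_of_le_ne_top hf <| ENNReal.tsum_le_tsum fun i => enorm_le_Tnorm lam (f i) n

theorem Tnorm_tsum_le {ι : Type*} (f : ι → Zd d → ℂ) :
    Tnorm lam (fun n => ∑' i, f i n) ≤ ∑' i, Tnorm lam (f i) := by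
  by_cases hf : ∑' i, Tnorm lam (f i) = ⊤
  · exact hf ▸ le_top
  have hsummable n := (summable_norm_of_tsum_Tnorm_ne_top lam hf n).of_norm
  simp only [Tnorm_eq_supENorm_add_weightedVariation, ENNReal.tsum_add]
  exact add_le_add (supENorm_tsum_le f) (weightedVariation_tsum_le _ f hsummable)

end Tnorm

section LatticeSums

theorem ENNReal.tsum_pi_prod_le_prod_tsum {ι κ : Type*} [Fintype ι] (f : ι → κ → ℝ≥0∞) :
    ∑' q : ι → κ, ∏ i, f i (q i) ≤ ∏ i, ∑' m, f i m := by
  classical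
  rw [ENNReal.tsum_eq_iSup_sum]
  refine iSup_le fun F => ?_
  calc ∑ q ∈ F, ∏ i, f i (q i)
      ≤ ∑ q ∈ Fintype.piFinset fun i => F.image (· i), ∏ i, f i (q i) :=
        Finset.sum_le_sum_of_subset fun q hq =>
          Fintype.mem_piFinset.2 fun i => Finset.mem_image_of_mem (· i) hq
    _ = ∏ i, ∑ m ∈ F.image (· i), f i m := (Finset.prod_univ_sum _ _).symm
    _ ≤ ∏ i, ∑' m, f i m := by gcongr; exact ENNReal.sum_le_tsum _

theorem hasSum_exp_neg_mul_abs_int {δ : ℝ} (hδ : 0 < δ) :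
    HasSum (fun m : ℤ => Real.exp (-(δ * |(m : ℝ)|)))
      ((1 + Real.exp (-δ)) / (1 - Real.exp (-δ))) := by
  set r := Real.exp (-δ)
  have hr : r < 1 := Real.exp_lt_one_iff.2 (by linarith)
  have hgeom : HasSum (fun n : ℕ => r ^ n) (1 - r)⁻¹ :=
    hasSum_geometric_of_lt_one (Real.exp_pos _).le hr
  have hpow (n : ℕ) : Real.exp (-(δ * n)) = r ^ n := by rw [← Real.exp_nat_mul]; ring_nf
  have hnonneg : HasSum (fun n : ℕ => Real.exp (-(δ * |((n : ℤ) : ℝ)|))) (1 - r)⁻¹ := by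
    simpa only [Int.cast_natCast, Nat.abs_cast, hpow] using hgeom
  have hneg : HasSum (fun n : ℕ => Real.exp (-(δ * |((-(n + 1) : ℤ) : ℝ)|))) (r * (1 - r)⁻¹) := by
    have hterm (n : ℕ) : Real.exp (-(δ * |((-(n + 1) : ℤ) : ℝ)|)) = r * r ^ n := by
      rw [← pow_succ', ← hpow, Int.cast_neg, abs_neg]
      norm_cast
    simpa only [hterm] using hgeom.mul_left r
  have htotal : (1 - r)⁻¹ + r * (1 - r)⁻¹ = (1 + r) / (1 - r) := by
    field_simp [(sub_pos.2 hr).ne']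
  exact htotal ▸ HasSum.of_nat_of_neg_add_one
    (f := fun m : ℤ => Real.exp (-(δ * |(m : ℝ)|))) hnonneg hneg

theorem tsum_ofReal_exp_neg_mul_absZ_le {d : ℕ} {δ : ℝ} (hδ : 0 < δ) :
    ∑' q : Zd d, ENNReal.ofReal (Real.exp (-(δ * absZ q))) ≤
      ENNReal.ofReal (((1 + Real.exp (-δ)) / (1 - Real.exp (-δ))) ^ d) := by
  have hsum := hasSum_exp_neg_mul_abs_int hδ
  have hr : Real.exp (-δ) < 1 := Real.exp_lt_one_iff.2 (by linarith)
  calc ∑' q : Zd d, ENNReal.ofReal (Real.exp (-(δ * absZ q)))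
      = ∑' q : Zd d, ∏ i, ENNReal.ofReal (Real.exp (-(δ * |(q i : ℝ)|))) := by
        refine tsum_congr fun q => ?_
        rw [absZ, Finset.mul_sum, ← Finset.sum_neg_distrib, Real.exp_sum,
          ENNReal.ofReal_prod_of_nonneg fun _ _ => (Real.exp_pos _).le]
    _ ≤ ∏ _i : Fin d, ∑' m : ℤ, ENNReal.ofReal (Real.exp (-(δ * |(m : ℝ)|))) :=
        ENNReal.tsum_pi_prod_le_prod_tsum fun _ (m : ℤ) => ENNReal.ofReal (Real.exp (-(δ * |(m : ℝ)|)))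
    _ = _ := by
        rw [← ENNReal.ofReal_tsum_of_nonneg (fun _ => (Real.exp_pos _).le) hsum.summable,
          hsum.tsum_eq, Finset.prod_const, Finset.card_univ, Fintype.card_fin,
          ENNReal.ofReal_pow (div_nonneg (by positivity) (by linarith))]

theorem one_add_exp_neg_div_one_sub_exp_neg_lt {δ : ℝ} (hδ : 0 < δ) (hδ1 : δ ≤ 1) :
    (1 + Real.exp (-δ)) / (1 - Real.exp (-δ)) < 3 / δ := by
  have hr : Real.exp (-δ) * (1 + δ) < 1 := by
    have := Real.add_one_lt_exp hδ.ne'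
    rw [Real.exp_neg]
    rw [inv_mul_lt_iff₀ (Real.exp_pos _)]
    linarith
  rw [div_lt_div_iff₀ (by nlinarith) hδ]
  nlinarith

end LatticeSums

section Diagonals

variable {d : ℕ}

theorem absZ_add_le (a b : Zd d) : absZ (a + b) ≤ absZ a + absZ b := by
  simp only [absZ, ← Finset.sum_add_distrib, Pi.add_apply, Int.cast_add]
  exact Finset.sum_le_sum fun i _ => abs_add_le _ _

theorem ofReal_exp_mul_ofReal_exp_neg (x : ℝ) :
    ENNReal.ofReal (Real.exp x) * ENNReal.ofReal (Real.exp (-x)) = 1 := by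
  rw [← ENNReal.ofReal_mul (Real.exp_pos _).le, ← Real.exp_add, add_neg_cancel, Real.exp_zero,
    ENNReal.ofReal_one]

def kthDiag (A : Zd d → Zd d → ℂ) (k : Zd d) : Zd d → ℂ := fun n => A n (n + k)

def diagProductTerm (X Y : Zd d → Zd d → ℂ) (k p : Zd d) : Zd d → ℂ :=
  kthDiag X p * fun n => kthDiag Y (k - p) (n + p)

theorem diagProductTerm_apply (X Y : Zd d → Zd d → ℂ) (k p n : Zd d) :
    diagProductTerm X Y k p n = X n (n + p) * Y (n + p) (n + k) := by
  simp only [diagProductTerm, kthDiag, Pi.mul_apply, add_add_sub_cancel]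

theorem kthDiag_mul (X Y : Zd d → Zd d → ℂ) (k : Zd d) :
    kthDiag (fun n m => ∑' l, X n l * Y l m) k = fun n => ∑' p, diagProductTerm X Y k p n := by
  ext n
  simp only [kthDiag, diagProductTerm_apply]
  exact ((Equiv.addLeft n).tsum_eq fun l => X n l * Y l (n + k)).symm

variable (lam : Zd d → ℝ)

theorem Tnorm_diagProductTerm_le (X Y : Zd d → Zd d → ℂ) (k p : Zd d) :
    Tnorm lam (diagProductTerm X Y k p) ≤
      Tnorm lam (kthDiag X p) * Tnorm lam (kthDiag Y (k - p)) :=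
  (Tnorm_mul_le lam _ _).trans_eq <| by rw [Tnorm_comp_add_right]

theorem Tnorm_kthDiag_le (α : ℝ) (A : Zd d → Zd d → ℂ) (k : Zd d) :
    Tnorm lam (kthDiag A k) ≤
      ENNReal.ofReal (Real.exp (-(α * absZ k))) * matNorm lam α A := by
  have hk : ENNReal.ofReal (Real.exp (α * absZ k)) * Tnorm lam (kthDiag A k) ≤
      matNorm lam α A :=
    le_iSup (fun k => ENNReal.ofReal (Real.exp (α * absZ k)) * Tnorm lam (kthDiag A k)) k
  calc Tnorm lam (kthDiag A k)
      = ENNReal.ofReal (Real.exp (-(α * absZ k))) *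
          (ENNReal.ofReal (Real.exp (α * absZ k)) * Tnorm lam (kthDiag A k)) := by
        rw [← mul_assoc, mul_comm (ENNReal.ofReal _), ofReal_exp_mul_ofReal_exp_neg, one_mul]
    _ ≤ _ := by gcongr

theorem matNorm_le_of_Tnorm_kthDiag_le {α : ℝ} {A : Zd d → Zd d → ℂ} {C : ℝ≥0∞}
    (h : ∀ k, Tnorm lam (kthDiag A k) ≤ ENNReal.ofReal (Real.exp (-(α * absZ k))) * C) :
    matNorm lam α A ≤ C :=
  iSup_le fun k => calc
    ENNReal.ofReal (Real.exp (α * absZ k)) * Tnorm lam (kthDiag A k)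
      ≤ ENNReal.ofReal (Real.exp (α * absZ k)) *
          (ENNReal.ofReal (Real.exp (-(α * absZ k))) * C) := by gcongr; exact h k
    _ = C := by rw [← mul_assoc, ofReal_exp_mul_ofReal_exp_neg, one_mul]

theorem tsum_Tnorm_kthDiag_mul_le (X Y : Zd d → Zd d → ℂ) {α δ : ℝ} (hδ : 0 < δ)
    (hδα : δ ≤ α) (k : Zd d) :
    ∑' p, Tnorm lam (kthDiag X p) * Tnorm lam (kthDiag Y (k - p)) ≤
      ENNReal.ofReal (Real.exp (-((α - δ) * absZ k))) *
        (ENNReal.ofReal (((1 + Real.exp (-δ)) / (1 - Real.exp (-δ))) ^ d) *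
          matNorm lam (α - δ) X * matNorm lam α Y) := by
  set E : ℝ → Zd d → ℝ≥0∞ := fun c q => ENNReal.ofReal (Real.exp (-(c * absZ q)))
  set M := matNorm lam (α - δ) X * matNorm lam α Y
  have hweight (p : Zd d) : E (α - δ) p * E α (k - p) ≤ E (α - δ) k * E δ (k - p) := by
    simp only [E, ← ENNReal.ofReal_mul (Real.exp_pos _).le, ← Real.exp_add]
    have htri := absZ_add_le p (k - p)
    rw [add_sub_cancel] at htri
    exact ENNReal.ofReal_le_ofReal <| Real.exp_le_exp.2 <| by
      nlinarith [mul_le_mul_of_nonneg_left htri (sub_nonneg.2 hδα)]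
  calc ∑' p, Tnorm lam (kthDiag X p) * Tnorm lam (kthDiag Y (k - p))
      ≤ ∑' p, E (α - δ) k * E δ (k - p) * M := ENNReal.tsum_le_tsum fun p => calc
          Tnorm lam (kthDiag X p) * Tnorm lam (kthDiag Y (k - p))
            ≤ E (α - δ) p * matNorm lam (α - δ) X * (E α (k - p) * matNorm lam α Y) :=
              mul_le_mul' (Tnorm_kthDiag_le lam _ X p) (Tnorm_kthDiag_le lam _ Y (k - p))
          _ = E (α - δ) p * E α (k - p) * M := by ring
          _ ≤ E (α - δ) k * E δ (k - p) * M := by gcongr ?_ * M; exact hweight p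
    _ = E (α - δ) k * (∑' q, E δ q) * M := by
        rw [ENNReal.tsum_mul_right, ENNReal.tsum_mul_left]
        exact congr_arg (E (α - δ) k * · * M) ((Equiv.subLeft k).tsum_eq (E δ))
    _ ≤ _ := by
        rw [mul_assoc, mul_assoc]
        gcongr
        exact tsum_ofReal_exp_neg_mul_absZ_le hδ

end Diagonals

theorem matNorm_product_estimate_general
    (d : ℕ) (hd : 1 ≤ d)
    (lam : Zd d → ℝ)
    (α δ : ℝ) (hδ : 0 < δ) (hδα : δ < α)
    (X Y : Zd d → Zd d → ℂ)
    (hX : matNorm lam (α - δ) X ≠ ⊤) (hY : matNorm lam α Y ≠ ⊤) :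
    (∀ n m : Zd d, Summable fun l : Zd d => ‖X n l * Y l m‖) ∧
    matNorm lam (α - δ) (fun n m => ∑' l : Zd d, X n l * Y l m) ≤
      ENNReal.ofReal (((1 + Real.exp (-δ)) / (1 - Real.exp (-δ))) ^ d) *
        matNorm lam (α - δ) X * matNorm lam α Y ∧
    (δ ≤ 1 → ((1 + Real.exp (-δ)) / (1 - Real.exp (-δ))) ^ d < (3 / δ) ^ d) := by
  set C := ENNReal.ofReal (((1 + Real.exp (-δ)) / (1 - Real.exp (-δ))) ^ d) *
    matNorm lam (α - δ) X * matNorm lam α Y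
  have hbound (k : Zd d) : ∑' p, Tnorm lam (diagProductTerm X Y k p) ≤
      ENNReal.ofReal (Real.exp (-((α - δ) * absZ k))) * C :=
    (ENNReal.tsum_le_tsum fun p => Tnorm_diagProductTerm_le lam X Y k p).trans
      (tsum_Tnorm_kthDiag_mul_le lam X Y hδ hδα.le k)
  refine ⟨fun n m => ?_, matNorm_le_of_Tnorm_kthDiag_le lam fun k => ?_, fun hδ1 => ?_⟩
  · have hfinite : ∑' p, Tnorm lam (diagProductTerm X Y (m - n) p) ≠ ⊤ :=
      ne_top_of_le_ne_top (by finiteness) (hbound (m - n))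
    have h := summable_norm_of_tsum_Tnorm_ne_top lam hfinite n
    simp only [diagProductTerm_apply, add_sub_cancel] at h
    exact (Equiv.addLeft n).summable_iff.1 h
  · rw [kthDiag_mul]
    exact (Tnorm_tsum_le lam _).trans (hbound k)
  · exact pow_lt_pow_left₀ (one_add_exp_neg_div_one_sub_exp_neg_lt hδ hδ1)
      (div_nonneg (by positivity) (by linarith [Real.exp_lt_one_iff.2 (neg_neg_of_pos hδ)]))
      (by omega)

theorem matNorm_product_estimate
    (d : ℕ) (hd : 1 ≤ d)
    (lam : Zd d → ℝ) (hl0 : ∀ j : Zd d, j ≠ 0 → lam j ≠ lam 0)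
    (α δ : ℝ) (hα : 0 < α) (hδ : 0 < δ) (hδα : δ < α)
    (X Y : Zd d → Zd d → ℂ)
    (hX : matNorm lam (α - δ) X ≠ ⊤) (hY : matNorm lam α Y ≠ ⊤) :
    (∀ n m : Zd d, Summable fun l : Zd d => ‖X n l * Y l m‖) ∧
    matNorm lam (α - δ) (fun n m => ∑' l : Zd d, X n l * Y l m) ≤
      ENNReal.ofReal (((1 + Real.exp (-δ)) / (1 - Real.exp (-δ))) ^ d) *
        matNorm lam (α - δ) X * matNorm lam α Y ∧
    (δ ≤ 1 → ((1 + Real.exp (-δ)) / (1 - Real.exp (-δ))) ^ d < (3 / δ) ^ d) :=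
  matNorm_product_estimate_general d hd lam α δ hδ hδα X Y hX hY
end
end
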